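/- arXiv:1302.4661 — 4 statements merged into one kernel-verified Lean document; each statement's English description precedes it below -/
import Mathlib

section
/- Let K be a compact Hausdorff scattered space of finite height. If K is a continuous image of a compact Hausdorff space having the extension property, then K has the extension property and the Banach space C(K) is isomorphic (as a topological vector space, via a bounded linear bijection with bounded inverse) to c0(I) for some index set I. -/
open Filter Topology
open scoped ZeroAtInfty

noncomputable section

/-- `E` is an extension operator for the closed set `F` in `K`. -/
def IsExtensionOperator {K : Type*} [TopologicalSpace K] (F : Set K)
    (E : C(↥F, ℝ) →L[ℝ] C(K, ℝ)) : Prop :=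
  ∀ f : C(↥F, ℝ), (E f).restrict F = f

/-- `F` admits an extension operator in `K`. -/
def HasExtensionOperator {K : Type*} [TopologicalSpace K] (F : Set K) : Prop :=
  ∃ E : C(↥F, ℝ) →L[ℝ] C(K, ℝ), IsExtensionOperator F E

/-- `K` has the extension property. -/
def HasExtensionProperty (K : Type*) [TopologicalSpace K] : Prop :=
  ∀ F : Set K, F.Nonempty → IsClosed F → HasExtensionOperator F

/-- `F` admits a regular extension operator in `K`. -/
def HasRegularExtensionOperator {K : Type*} [TopologicalSpace K] [CompactSpace K]
    (F : Set K) (hF : IsClosed F) : Prop :=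
  haveI : CompactSpace ↥F := isCompact_iff_compactSpace.mp hF.isCompact
  ∃ E : C(↥F, ℝ) →L[ℝ] C(K, ℝ), IsExtensionOperator F E ∧ ‖E‖ ≤ 1 ∧ E 1 = 1

/-- `K` has the regular extension property. -/
def HasRegularExtensionProperty (K : Type*) [TopologicalSpace K] [CompactSpace K] : Prop :=
  ∀ F : Set K, F.Nonempty → ∀ hF : IsClosed F, HasRegularExtensionOperator F hF

/-- The submodule `C(K|G)` of `C(K, ℝ)` of functions vanishing on `G`. -/
def vanishingSubmodule {K : Type*} [TopologicalSpace K] (G : Set K) :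
    Submodule ℝ C(K, ℝ) where
  carrier := {f | ∀ x ∈ G, f x = 0}
  add_mem' := by intro f g hf hg x hx; simp [hf x hx, hg x hx]
  zero_mem' := by intro x hx; simp
  smul_mem' := by intro c f hf x hx; simp [hf x hx]

/-- The canonical basis vector of `c₀(I)`: the characteristic function of `{i}`. -/
def c0Single {I : Type*} [TopologicalSpace I] [DiscreteTopology I] (i : I) : C₀(I, ℝ) :=
  letI := Classical.decEq I
  { toFun := fun j => if j = i then (1 : ℝ) else 0
    continuous_toFun := continuous_of_discreteTopology
    zero_at_infty' := by
      have h : (fun j => if j = i then (1 : ℝ) else 0) =ᶠ[Filter.cocompact I] (fun _ => 0) := by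
        filter_upwards [Filter.mem_cocompact.mpr ⟨{i}, isCompact_singleton, subset_rfl⟩] with j hj
        simp only [Set.mem_compl_iff, Set.mem_singleton_iff] at hj
        simp [hj]
      exact Filter.Tendsto.congr' h.symm tendsto_const_nhds }

/-- `X` satisfies the countable chain condition. -/
def CountableChainCondition (X : Type*) [TopologicalSpace X] : Prop :=
  ∀ 𝒰 : Set (Set X), (∀ U ∈ 𝒰, IsOpen U ∧ U.Nonempty) → 𝒰.Pairwise Disjoint → 𝒰.Countable

universe u

/-!
Write `K'` for the derived set of `K`; the points outside `K'` are isolated. Given a continuous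
surjection `φ : M → K` from a compact space and a closed `F ⊇ K'`, an extension operator `E` for
`φ⁻¹ F` in `M` gives one for `F` in `K`, namely `f ↦ E (f ∘ φ) ∘ s` for an arbitrary, possibly
discontinuous, section `s` of `φ`: since `φ` is a closed map, this is continuous at the points of
`F`, and at the isolated points there is nothing to check. Applying this to `F ∪ K'` and then
inducting on the height inside `F ∪ K'` extends from any closed `F`.

An extension operator for `K'` splits `C(K)` as `C(K') × C(K | K')`, and the functions vanishing on
`K'` form `c₀(K \ K')`. By induction on the height, `C(K)` is `c₀` of the disjoint union of the
discrete levels `K⁽ⁱ⁾ \ K⁽ⁱ⁺¹⁾`.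
-/

namespace ContinuousMap

variable {X Y : Type*} [TopologicalSpace X] [TopologicalSpace Y]

@[simps apply]
def compRightCLM (g : C(X, Y)) : C(Y, ℝ) →L[ℝ] C(X, ℝ) where
  toFun f := f.comp g
  map_add' _ _ := rfl
  map_smul' _ _ := rfl
  cont := (compRightContinuousMap ℝ g).continuous

end ContinuousMap

open ContinuousMap

section Topology

variable {X Y Z : Type*} [TopologicalSpace X] [TopologicalSpace Y] [TopologicalSpace Z]

theorem continuous_of_continuousAt_of_derivedSet_subset {f : X → Y} {F : Set X}
    (hF : derivedSet Set.univ ⊆ F) (h : ∀ x ∈ F, ContinuousAt f x) : Continuous f :=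
  continuous_iff_continuousAt.2 fun x ↦ by
    by_cases hx : x ∈ F
    · exact h x hx
    · exact continuousAt_of_not_accPt_top fun hacc ↦
        hx (hF (by rwa [mem_derivedSet, principal_univ]))

theorem continuousAt_comp_rightInverse {φ : X → Y} (hφ : IsClosedMap φ) {s : Y → X}
    (hs : Function.RightInverse s φ) {g : X → Z} (hg : Continuous g) {y : Y}
    (hfiber : ∀ x, φ x = y → g x = g (s y)) : ContinuousAt (g ∘ s) y := by
  refine (nhds_basis_opens _).tendsto_right_iff.2 fun V ⟨hgV, hV⟩ ↦ ?_
  have hy : y ∉ φ '' (g ⁻¹' V)ᶜ := by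
    rintro ⟨x, hx, rfl⟩
    exact hx (by simpa [hfiber x rfl] using hgV)
  filter_upwards [(hφ _ (hV.preimage hg).isClosed_compl).isOpen_compl.mem_nhds hy] with y' hy'
  by_contra hout
  exact hy' ⟨s y', hout, hs y'⟩

theorem Continuous.image_iterate_derivedSet_subset {f : X → Y} (hf : Continuous f)
    (hinj : Function.Injective f) (A : Set X) (k : ℕ) :
    f '' derivedSet^[k] A ⊆ derivedSet^[k] (f '' A) := by
  induction k with
  | zero => exact subset_rfl
  | succ k ih =>
    simp only [Function.iterate_succ_apply']
    exact (hf.image_derivedSet hinj).trans (derivedSet_mono _ _ ih)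

theorem iterate_derivedSet_union_subset {F : Set X} (hF : IsClosed F) (A : Set X) (k : ℕ) :
    derivedSet^[k] (F ∪ A) ⊆ F ∪ derivedSet^[k] A := by
  induction k with
  | zero => exact subset_rfl
  | succ k ih =>
    simp only [Function.iterate_succ_apply']
    calc derivedSet (derivedSet^[k] (F ∪ A)) ⊆ derivedSet (F ∪ derivedSet^[k] A) :=
          derivedSet_mono _ _ ih
      _ = derivedSet F ∪ derivedSet (derivedSet^[k] A) := derivedSet_union _ _
      _ ⊆ F ∪ derivedSet (derivedSet^[k] A) :=
          Set.union_subset_union_left _ ((isClosed_iff_derivedSet_subset F).1 hF)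

theorem image_val_iterate_derivedSet_subset (G : Set X) (k : ℕ) :
    Subtype.val '' derivedSet^[k] (Set.univ : Set G) ⊆ derivedSet^[k] G := by
  simpa using continuous_subtype_val.image_iterate_derivedSet_subset Subtype.val_injective
    (Set.univ : Set G) k

theorem discreteTopology_compl_derivedSet_univ :
    DiscreteTopology ((derivedSet (Set.univ : Set X))ᶜ : Set X) :=
  discreteTopology_subtype_iff.2 fun x hx ↦ by
    rw [Set.mem_compl_iff, mem_derivedSet, AccPt, not_neBot, principal_univ, inf_top_eq] at hx
    exact le_bot_iff.1 (hx ▸ inf_le_left)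

theorem Filter.Tendsto.sumElim_cocompact {α : Type*} {f : X → α} {g : Y → α}
    {l : Filter α} (hf : Tendsto f (cocompact X) l) (hg : Tendsto g (cocompact Y) l) :
    Tendsto (Sum.elim f g) (cocompact (X ⊕ Y)) l := fun s hs ↦ by
  obtain ⟨t, ht, hts⟩ := mem_cocompact.1 (hf hs)
  obtain ⟨t', ht', hts'⟩ := mem_cocompact.1 (hg hs)
  refine mem_cocompact.2 ⟨_, (ht.image continuous_inl).union (ht'.image continuous_inr), ?_⟩
  rintro (x | y) hxy
  · exact hts fun hx ↦ hxy (.inl ⟨x, hx, rfl⟩)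
  · exact hts' fun hy ↦ hxy (.inr ⟨y, hy, rfl⟩)

end Topology

section ExtensionOperator

variable {K : Type*} [TopologicalSpace K]

theorem IsExtensionOperator.apply {F : Set K} {E : C(F, ℝ) →L[ℝ] C(K, ℝ)}
    (hE : IsExtensionOperator F E) (f : C(F, ℝ)) {x : K} (hx : x ∈ F) : E f x = f ⟨x, hx⟩ :=
  ContinuousMap.congr_fun (hE f) ⟨x, hx⟩

theorem hasExtensionOperator_univ : HasExtensionOperator (Set.univ : Set K) :=
  ⟨compRightCLM (Homeomorph.Set.univ K).symm, fun _ ↦ rfl⟩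

theorem HasExtensionOperator.trans {F G : Set K} (hFG : F ⊆ G) (hG : HasExtensionOperator G)
    (hF : HasExtensionOperator (Subtype.val ⁻¹' F : Set G)) : HasExtensionOperator F := by
  obtain ⟨EG, hEG⟩ := hG
  obtain ⟨EF, hEF⟩ := hF
  refine ⟨EG ∘L EF ∘L compRightCLM ⟨_, continuous_subtype_val.restrictPreimage⟩, fun f ↦ ?_⟩
  ext ⟨x, hx⟩
  simp [hEG.apply _ (hFG hx), hEF.apply _ (show (⟨x, hFG hx⟩ : G) ∈ Subtype.val ⁻¹' F from hx)]

theorem HasExtensionOperator.preimage_val {F G : Set K} (hFG : F ⊆ G)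
    (hF : HasExtensionOperator F) : HasExtensionOperator (Subtype.val ⁻¹' F : Set G) := by
  obtain ⟨E, hE⟩ := hF
  let ι : C(F, Subtype.val ⁻¹' F) := ⟨fun x ↦ ⟨Set.inclusion hFG x, x.2⟩,
    (continuous_inclusion hFG).subtype_mk _⟩
  refine ⟨compRightCLM ⟨Subtype.val, continuous_subtype_val⟩ ∘L E ∘L compRightCLM ι, fun f ↦ ?_⟩
  ext ⟨x, hx⟩
  simp [hE.apply _ hx, ι]

theorem HasExtensionProperty.subtype (h : HasExtensionProperty K) {F : Set K}
    (hF : IsClosed F) : HasExtensionProperty F := fun G hne hG ↦ by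
  have hext := (h _ (hne.image _) (hF.isClosedMap_subtype_val _ hG)).preimage_val
    (Subtype.coe_image_subset F G)
  rwa [Subtype.val_injective.preimage_image] at hext

theorem hasExtensionOperator_empty : HasExtensionOperator (∅ : Set K) :=
  ⟨0, fun _ ↦ ContinuousMap.ext fun x ↦ x.2.elim⟩

theorem HasExtensionProperty.hasExtensionOperator (h : HasExtensionProperty K) {F : Set K}
    (hF : IsClosed F) : HasExtensionOperator F := by
  rcases F.eq_empty_or_nonempty with rfl | hne
  · exact hasExtensionOperator_empty
  · exact h F hne hF

end ExtensionOperator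

theorem HasExtensionOperator.of_surjective {M K : Type*} [TopologicalSpace M] [CompactSpace M]
    [TopologicalSpace K] [CompactSpace K] [T2Space K] {φ : M → K} (hφc : Continuous φ)
    (hφs : Function.Surjective φ) {F : Set K} (hF : IsClosed F)
    (hder : derivedSet Set.univ ⊆ F) (hE : HasExtensionOperator (φ ⁻¹' F)) :
    HasExtensionOperator F := by
  have : CompactSpace F := isCompact_iff_compactSpace.1 hF.isCompact
  obtain ⟨E, hE⟩ := hE
  obtain ⟨s, hs⟩ := hφs.hasRightInverse
  let A := E ∘L compRightCLM ⟨_, hφc.restrictPreimage⟩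
  have hA : ∀ f m (hm : φ m ∈ F), A f m = f ⟨φ m, hm⟩ := fun f m hm ↦ hE.apply _ hm
  have hcont : ∀ f, Continuous (A f ∘ s) := fun f ↦
    continuous_of_continuousAt_of_derivedSet_subset hder fun y hy ↦
      continuousAt_comp_rightInverse hφc.isClosedMap hs (A f).continuous fun m hm ↦ by
        subst hm
        rw [hA f m hy, hA f (s (φ m)) (by rwa [hs])]
        exact congrArg f (Subtype.ext (hs _).symm)
  let T : C(F, ℝ) →ₗ[ℝ] C(K, ℝ) :=
    { toFun f := ⟨A f ∘ s, hcont f⟩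
      map_add' f g := by ext; simp
      map_smul' c f := by ext; simp }
  refine ⟨T.mkContinuous ‖A‖ fun f ↦ ?_, fun f ↦ ?_⟩
  · refine ((ContinuousMap.norm_le _ (norm_nonneg _)).2 fun y ↦ ?_).trans (A.le_opNorm f)
    exact (A f).norm_coe_le_norm (s y)
  · ext ⟨y, hy⟩
    change A f (s y) = f ⟨y, hy⟩
    rw [hA f (s y) (by rwa [hs])]
    exact congrArg f (Subtype.ext (hs y))

theorem HasExtensionProperty.hasExtensionOperator_of_iterate_derivedSet_subset {M K : Type*}
    [TopologicalSpace M] [CompactSpace M] [TopologicalSpace K] [CompactSpace K] [T2Space K]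
    (hM : HasExtensionProperty M) {φ : M → K} (hφc : Continuous φ) (hφs : Function.Surjective φ)
    {n : ℕ} {F : Set K} (hne : F.Nonempty) (hF : IsClosed F)
    (hsub : derivedSet^[n] Set.univ ⊆ F) : HasExtensionOperator F := by
  induction n generalizing M K with
  | zero =>
    rw [Function.iterate_zero_apply, Set.univ_subset_iff] at hsub
    exact hsub ▸ hasExtensionOperator_univ
  | succ n ih =>
    set G := F ∪ derivedSet (Set.univ : Set K)
    have hG : IsClosed G := hF.union (isClosed_derivedSet _)
    have hGext : HasExtensionOperator G :=
      .of_surjective hφc hφs hG Set.subset_union_right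
        (hM _ ((hne.mono Set.subset_union_left).preimage hφs) (hG.preimage hφc))
    have : CompactSpace G := isCompact_iff_compactSpace.1 hG.isCompact
    have : CompactSpace (φ ⁻¹' G) := isCompact_iff_compactSpace.1 (hG.preimage hφc).isCompact
    have hGn : derivedSet^[n] (Set.univ : Set G) ⊆ Subtype.val ⁻¹' F := fun x hx ↦ by
      have hxG := image_val_iterate_derivedSet_subset G n ⟨x, hx, rfl⟩
      rcases iterate_derivedSet_union_subset hF _ n hxG with hxF | hxD
      · exact hxF
      · exact hsub (by rwa [Function.iterate_succ_apply])
    exact hGext.trans Set.subset_union_left <|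
      ih (hM.subtype (hG.preimage hφc)) hφc.restrictPreimage (G.restrictPreimage_surjective hφs)
        (by obtain ⟨x, hx⟩ := hne; exact ⟨⟨x, .inl hx⟩, hx⟩) (hF.preimage continuous_subtype_val)
        hGn

namespace ZeroAtInftyContinuousMap

variable {X Y : Type*} [TopologicalSpace X] [TopologicalSpace Y]

theorem norm_coe_le_norm (f : C₀(X, ℝ)) (x : X) : ‖f x‖ ≤ ‖f‖ :=
  f.toBCF.norm_coe_le_norm x

theorem norm_le (f : C₀(X, ℝ)) {C : ℝ} (hC : 0 ≤ C) : ‖f‖ ≤ C ↔ ∀ x, ‖f x‖ ≤ C :=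
  BoundedContinuousFunction.norm_le hC

def sumLinearEquiv : (C₀(X, ℝ) × C₀(Y, ℝ)) ≃ₗ[ℝ] C₀(X ⊕ Y, ℝ) where
  toFun p := ⟨⟨Sum.elim p.1 p.2, p.1.continuous.sumElim p.2.continuous⟩,
    p.1.zero_at_infty'.sumElim_cocompact p.2.zero_at_infty'⟩
  map_add' _ _ := by ext (x | y) <;> rfl
  map_smul' _ _ := by ext (x | y) <;> rfl
  invFun h :=
    (⟨⟨h ∘ Sum.inl, h.continuous.comp continuous_inl⟩,
      h.zero_at_infty'.comp IsClosedEmbedding.inl.tendsto_cocompact⟩,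
     ⟨⟨h ∘ Sum.inr, h.continuous.comp continuous_inr⟩,
      h.zero_at_infty'.comp IsClosedEmbedding.inr.tendsto_cocompact⟩)
  left_inv _ := rfl
  right_inv h := by ext (x | y) <;> rfl

def sumEquiv : (C₀(X, ℝ) × C₀(Y, ℝ)) ≃L[ℝ] C₀(X ⊕ Y, ℝ) :=
  sumLinearEquiv.toContinuousLinearEquivOfBounds 1 1
    (fun p ↦ by
      rw [one_mul, norm_le _ (norm_nonneg _)]
      rintro (x | y)
      · exact (p.1.norm_coe_le_norm x).trans (le_max_left _ _)
      · exact (p.2.norm_coe_le_norm y).trans (le_max_right _ _))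
    (fun h ↦ by
      rw [one_mul, Prod.norm_def]
      exact max_le ((norm_le _ (norm_nonneg _)).2 fun x ↦ h.norm_coe_le_norm _)
        ((norm_le _ (norm_nonneg _)).2 fun y ↦ h.norm_coe_le_norm _))

end ZeroAtInftyContinuousMap

section VanishingFunctions

variable {K : Type*} [TopologicalSpace K]

theorem tendsto_subtype_val_cocompact_nhdsSet [CompactSpace K] (F : Set K) :
    Tendsto (Subtype.val : (Fᶜ : Set K) → K) (cocompact _) (𝓝ˢ F) := fun V hV ↦ by
  obtain ⟨W, hW, hFW, hWV⟩ := mem_nhdsSet_iff_exists.1 hV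
  refine mem_cocompact.2 ⟨Subtype.val ⁻¹' Wᶜ, Subtype.isCompact_iff.2 ?_, fun x hx ↦ ?_⟩
  · rw [Subtype.image_preimage_coe, Set.inter_eq_right.2 (Set.compl_subset_compl.2 hFW)]
    exact hW.isClosed_compl.isCompact
  · exact hWV (not_not.1 hx)

theorem continuous_extend_val_zero [T2Space K] {U : Set K} (hU : IsOpen U) (c : C₀(U, ℝ)) :
    Continuous (Function.extend Subtype.val c 0) := by
  refine continuous_iff_continuousAt.2 fun x ↦ ?_
  by_cases hx : x ∈ U
  · rw [← Subtype.coe_mk x hx, ← hU.isOpenEmbedding_subtypeVal.continuousAt_iff,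
      Function.extend_comp Subtype.val_injective]
    exact c.continuous.continuousAt
  · rw [ContinuousAt, Function.extend_apply' _ _ _ (by simpa using hx), Pi.zero_apply,
      Metric.tendsto_nhds]
    intro ε hε
    obtain ⟨t, ht, hts⟩ := mem_cocompact.1 (Metric.tendsto_nhds.1 c.zero_at_infty' ε hε)
    have hxt : x ∉ Subtype.val '' t := fun ⟨u, _, hu⟩ ↦ hx (hu ▸ u.2)
    filter_upwards [(ht.image continuous_subtype_val).isClosed.isOpen_compl.mem_nhds hxt]
      with y hy
    by_cases hyU : y ∈ U
    · rw [← Subtype.coe_mk y hyU, Subtype.val_injective.extend_apply]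
      exact hts fun h ↦ hy ⟨_, h, rfl⟩
    · rwa [Function.extend_apply' _ _ _ (by simpa using hyU), Pi.zero_apply, dist_self]

theorem ker_compRightCLM_subtypeVal (F : Set K) :
    LinearMap.ker ((compRightCLM ⟨Subtype.val, continuous_subtype_val⟩ : C(K, ℝ) →L[ℝ] C(F, ℝ)) :
      C(K, ℝ) →ₗ[ℝ] C(F, ℝ)) = vanishingSubmodule F := by
  ext f
  change _ ↔ ∀ x ∈ F, f x = 0
  simp [ContinuousMap.ext_iff]

variable [CompactSpace K] [T2Space K] {F : Set K}

def vanishingSubmoduleEquivZeroAtInfty (hF : IsClosed F) :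
    vanishingSubmodule F ≃L[ℝ] C₀((Fᶜ : Set K), ℝ) :=
  LinearEquiv.toContinuousLinearEquivOfBounds
    { toFun f := ⟨(f : C(K, ℝ)).restrict Fᶜ, by
        have hf : Set.MapsTo (f : C(K, ℝ)) F {0} := fun x hx ↦ f.2 x hx
        rw [← nhdsSet_singleton]
        exact ((f : C(K, ℝ)).continuous.tendsto_nhdsSet hf).comp
          (tendsto_subtype_val_cocompact_nhdsSet F)⟩
      map_add' _ _ := rfl
      map_smul' _ _ := rfl
      invFun c := ⟨⟨_, continuous_extend_val_zero hF.isOpen_compl c⟩, fun x hx ↦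
        Function.extend_apply' _ _ _ (by simpa using hx)⟩
      left_inv f := by
        ext x
        by_cases hx : x ∈ F
        · simp [Function.extend_apply' _ _ _ (by simpa using hx : ¬∃ u : (Fᶜ : Set K), ↑u = x),
            f.2 x hx]
        · exact Subtype.val_injective.extend_apply _ _ (⟨x, hx⟩ : (Fᶜ : Set K))
      right_inv c := by
        ext u
        exact Subtype.val_injective.extend_apply _ _ u }
    1 1
    (fun f ↦ by
      rw [one_mul, ZeroAtInftyContinuousMap.norm_le _ (norm_nonneg _)]
      exact fun u ↦ (f : C(K, ℝ)).norm_coe_le_norm u)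
    (fun c ↦ by
      rw [one_mul]
      refine (ContinuousMap.norm_le _ (norm_nonneg _)).2 fun x ↦ ?_
      by_cases hx : x ∈ F
      · simp [Function.extend_apply' _ _ _ (by simpa using hx : ¬∃ u : (Fᶜ : Set K), ↑u = x)]
      · have := c.norm_coe_le_norm ⟨x, hx⟩
        rwa [← Subtype.val_injective.extend_apply c 0] at this)

def IsExtensionOperator.equivProd {E : C(F, ℝ) →L[ℝ] C(K, ℝ)} (hF : IsClosed F)
    (hE : IsExtensionOperator F E) : C(K, ℝ) ≃L[ℝ] C(F, ℝ) × C₀((Fᶜ : Set K), ℝ) :=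
  (ContinuousLinearEquiv.equivOfRightInverse (compRightCLM ⟨Subtype.val, continuous_subtype_val⟩) E
    fun f ↦ hE f).trans <|
    (ContinuousLinearEquiv.refl ℝ _).prodCongr <|
      (ContinuousLinearEquiv.ofEq _ _ (ker_compRightCLM_subtypeVal F)).trans
        (vanishingSubmoduleEquivZeroAtInfty hF)

end VanishingFunctions

theorem HasExtensionProperty.exists_continuousLinearEquiv_zeroAtInfty {K : Type u}
    [TopologicalSpace K] [CompactSpace K] [T2Space K] (hK : HasExtensionProperty K) {n : ℕ}
    (hn : derivedSet^[n] (Set.univ : Set K) = ∅) : ∃ (I : Type u) (_ : TopologicalSpace I)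
      (_ : DiscreteTopology I), Nonempty (C(K, ℝ) ≃L[ℝ] C₀(I, ℝ)) := by
  induction n generalizing K with
  | zero =>
    have : IsEmpty K := Set.univ_eq_empty_iff.1 hn
    exact ⟨PEmpty, ⊥, ⟨rfl⟩, ⟨.equivOfInverse 0 0 (fun f ↦ ContinuousMap.ext isEmptyElim)
      fun g ↦ ZeroAtInftyContinuousMap.ext fun i ↦ i.elim⟩⟩
  | succ n ih =>
    set D := derivedSet (Set.univ : Set K)
    have hD : IsClosed D := isClosed_derivedSet _
    have : CompactSpace D := isCompact_iff_compactSpace.1 hD.isCompact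
    have : DiscreteTopology (Dᶜ : Set K) := discreteTopology_compl_derivedSet_univ
    have hDn : derivedSet^[n] (Set.univ : Set D) = ∅ := by
      rw [Function.iterate_succ_apply] at hn
      exact Set.image_eq_empty.1 <|
        Set.subset_empty_iff.1 (hn ▸ image_val_iterate_derivedSet_subset D n)
    obtain ⟨I, _, _, ⟨e⟩⟩ := ih (hK.subtype hD) hDn
    obtain ⟨E, hE⟩ := hK.hasExtensionOperator hD
    exact ⟨I ⊕ (Dᶜ : Set K), _, inferInstance, ⟨(hE.equivProd hD).trans <|
      (e.prodCongr (.refl ℝ _)).trans ZeroAtInftyContinuousMap.sumEquiv⟩⟩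

theorem stmt13 {K : Type u} [TopologicalSpace K] [CompactSpace K] [T2Space K]
    (hscat : ∃ n : ℕ, derivedSet^[n] (Set.univ : Set K) = ∅)
    (himg : ∃ (M : Type u) (_ : TopologicalSpace M), CompactSpace M ∧ T2Space M ∧
        HasExtensionProperty M ∧ ∃ φ : M → K, Continuous φ ∧ Function.Surjective φ) :
    HasExtensionProperty K ∧
      ∃ I : Type u, letI : TopologicalSpace I := ⊥
        Nonempty (C(K, ℝ) ≃L[ℝ] C₀(I, ℝ)) := by
  obtain ⟨n, hn⟩ := hscat
  obtain ⟨M, _, _, _, hM, φ, hφc, hφs⟩ := himg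
  have hK : HasExtensionProperty K := fun F hne hF ↦
    hM.hasExtensionOperator_of_iterate_derivedSet_subset hφc hφs hne hF (hn ▸ Set.empty_subset F)
  obtain ⟨I, _, hI, ⟨e⟩⟩ := hK.exists_continuousLinearEquiv_zeroAtInfty hn
  obtain rfl := hI.eq_bot
  exact ⟨hK, I, ⟨e⟩⟩
end
end

section
/- Let (K_i)_{i∈I} be a family of nonempty compact Hausdorff spaces, each having the regular extension property. Then the one-point (Alexandroff) compactification of the topological sum ⨆_{i∈I} K_i has the regular extension property. -/
open Filter Topology
open scoped ZeroAtInfty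

noncomputable section

/-! Proof idea: as the blocks of `X = Σ i, K i` are compact and open, the neighbourhoods of `∞`
in `OnePoint X` are generated by the complements of finitely many blocks. Fix `p ∈ F`, with `p = ∞`
if `∞ ∈ F`. Extend `f ∈ C(F)` on each block `K i` meeting `F` by a regular extension operator of
`K i` applied to the restriction of `f`, and by the constant `f p` on the other blocks and at `∞`.
A regular operator keeps values within `ε` of a constant when its argument is, and `f` is within
`ε` of `f p` on `F ∩ K i` for all but finitely many `i`; so the glued function is continuous at
`∞`. -/

namespace ContinuousMap

variable {X Y : Type*} [TopologicalSpace X] [CompactSpace X] [TopologicalSpace Y] [CompactSpace Y]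

theorem norm_evalCLM_le (x : X) : ‖evalCLM ℝ (M := ℝ) x‖ ≤ 1 :=
  ContinuousLinearMap.opNorm_le_bound _ zero_le_one fun f => by
    simpa using f.norm_coe_le_norm x

theorem norm_compCLM_le (g : C(X, Y)) : ‖compCLM ℝ ℝ g‖ ≤ 1 :=
  ContinuousLinearMap.opNorm_le_bound _ zero_le_one fun f =>
    (norm_le _ (by positivity)).2 fun x => by simpa using f.norm_coe_le_norm (g x)

end ContinuousMap

theorem ContinuousMap.eventually_nhds_forall_mem {Y Z : Type*} [TopologicalSpace Y]
    [TopologicalSpace Z] {F : Set Y} (hF : IsClosed F) (f : C(F, Z)) {q : Y} {S : Set Z}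
    (hS : ∀ hq : q ∈ F, S ∈ 𝓝 (f ⟨q, hq⟩)) : ∀ᶠ x in 𝓝 q, ∀ hx : x ∈ F, f ⟨x, hx⟩ ∈ S := by
  by_cases hq : q ∈ F
  · obtain ⟨V, hV, hVS⟩ := (mem_nhds_subtype F ⟨q, hq⟩ _).1 (f.continuous.continuousAt (hS hq))
    filter_upwards [hV] with x hx hxF using hVS (a := ⟨x, hxF⟩) hx
  · filter_upwards [hF.isOpen_compl.mem_nhds hq] with x hx hxF using absurd hxF hx

theorem Filter.coclosedCompact_sigma {ι : Type*} {X : ι → Type*} [∀ i, TopologicalSpace (X i)]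
    [∀ i, CompactSpace (X i)] : coclosedCompact (Σ i, X i) = comap Sigma.fst cofinite := by
  refine le_antisymm (fun s hs => ?_) (hasBasis_coclosedCompact.ge_iff.2 ?_)
  · obtain ⟨t, ht, hts⟩ := mem_comap.1 hs
    have hcl : IsClosed (Sigma.fst ⁻¹' tᶜ : Set (Σ i, X i)) :=
      (isOpen_sigma_fst_preimage t).isClosed_compl
    have hco : IsCompact (Sigma.fst ⁻¹' tᶜ : Set (Σ i, X i)) :=
      Set.sigma_univ (α := X) ▸ Set.isCompact_sigma ht fun i _ => isCompact_univ
    exact mem_of_superset (hasBasis_coclosedCompact.mem_of_mem ⟨hcl, hco⟩) fun z hz =>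
      hts (by simpa using hz)
  · rintro C ⟨-, hC⟩
    obtain ⟨s, t, hs, -, rfl⟩ := hC.sigma_exists_finite_sigma_eq
    exact mem_comap.2 ⟨sᶜ, hs.compl_mem_cofinite, fun z hz hzC => hz hzC.1⟩

theorem OnePoint.eventually_cofinite_abs_sub_le {ι : Type*} {X : ι → Type*}
    [∀ i, TopologicalSpace (X i)] [∀ i, CompactSpace (X i)] {F : Set (OnePoint (Σ i, X i))}
    (hF : IsClosed F) (p : F) (hp : ∀ h : OnePoint.infty ∈ F, p = ⟨OnePoint.infty, h⟩)
    (f : C(F, ℝ)) {ε : ℝ} (hε : 0 < ε) :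
    ∀ᶠ i in cofinite, ∀ y (hy : ((⟨i, y⟩ : Σ i, X i) : OnePoint (Σ i, X i)) ∈ F),
      |f ⟨_, hy⟩ - f p| ≤ ε := by
  have hnhds := f.eventually_nhds_forall_mem hF (S := Metric.closedBall (f p) ε) fun h => by
    rw [← hp h]; exact Metric.closedBall_mem_nhds _ hε
  have := hnhds.comap ((↑) : (Σ i, X i) → OnePoint (Σ i, X i))
  rw [OnePoint.comap_coe_nhds_infty, Filter.coclosedCompact_sigma, eventually_comap] at this
  filter_upwards [this] with i hi y hy
  exact hi ⟨i, y⟩ rfl hy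

theorem HasRegularExtensionProperty.exists_extension_along {K Y : Type*} [TopologicalSpace K]
    [CompactSpace K] [TopologicalSpace Y] (hK : HasRegularExtensionProperty K) {F : Set Y}
    [CompactSpace F] (hF : IsClosed F) (p : F) (j : C(K, Y)) :
    ∃ B : C(F, ℝ) →L[ℝ] C(K, ℝ), ‖B‖ ≤ 1 ∧ B 1 = 1 ∧
      (∀ f y (hy : j y ∈ F), B f y = f ⟨j y, hy⟩) ∧
      ∀ f ε, 0 ≤ ε → (∀ y (hy : j y ∈ F), |f ⟨j y, hy⟩ - f p| ≤ ε) → ∀ y, |B f y - f p| ≤ ε := by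
  by_cases hne : (j ⁻¹' F).Nonempty
  · have hG : IsClosed (j ⁻¹' F) := hF.preimage j.continuous
    have : CompactSpace (j ⁻¹' F) := isCompact_iff_compactSpace.mp hG.isCompact
    obtain ⟨E, hext, hnorm, hone⟩ := hK _ hne hG
    set r := ContinuousMap.compCLM ℝ ℝ (j.restrictPreimage F)
    refine ⟨E.comp r, ?_, ?_, fun f y hy => DFunLike.congr_fun (hext (r f)) ⟨y, hy⟩, ?_⟩
    · exact (E.opNorm_comp_le r).trans
        (mul_le_one₀ hnorm (norm_nonneg r) (ContinuousMap.norm_compCLM_le _))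
    · simpa [r] using hone
    · intro f ε hε hf y
      have hrf : ‖r f - f p • 1‖ ≤ ε :=
        (ContinuousMap.norm_le _ hε).2 fun x => by
          simpa [r, Set.restrictPreimage, Set.MapsTo.restrict, Subtype.map] using hf x x.2
      have hEr : E (r f) - f p • 1 = E (r f - f p • 1) := by rw [map_sub, map_smul, hone]
      calc |E (r f) y - f p| = ‖(E (r f) - f p • 1) y‖ := by simp
        _ ≤ ‖E (r f - f p • 1)‖ := hEr ▸ ContinuousMap.norm_coe_le_norm _ y
        _ ≤ ‖r f - f p • 1‖ := E.le_of_opNorm_le hnorm _ |>.trans_eq (one_mul _)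
        _ ≤ ε := hrf
  · refine ⟨(ContinuousLinearMap.const ℝ K).comp (ContinuousMap.evalCLM ℝ p), ?_, rfl,
      fun f y hy => absurd ⟨y, hy⟩ hne, fun f ε hε _ y => by simpa using hε⟩
    exact ContinuousLinearMap.opNorm_le_bound _ zero_le_one fun f =>
      (ContinuousMap.norm_le _ (by positivity)).2 fun y => by simpa using f.norm_coe_le_norm p

theorem OnePoint.exists_sigma_continuousLinearMap {E : Type*} [SeminormedAddCommGroup E]
    [NormedSpace ℝ E] {ι : Type*} {X : ι → Type*} [∀ i, TopologicalSpace (X i)]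
    [∀ i, CompactSpace (X i)] {C : ℝ} (L : E →L[ℝ] ℝ) (B : ∀ i, E →L[ℝ] C(X i, ℝ))
    (hL : ‖L‖ ≤ C) (hB : ∀ i, ‖B i‖ ≤ C)
    (hlim : ∀ e, ∀ ε > 0, ∀ᶠ i in cofinite, ∀ y, |B i e y - L e| ≤ ε) :
    ∃ T : E →L[ℝ] C(OnePoint (Σ i, X i), ℝ), ‖T‖ ≤ C ∧ (∀ e, T e OnePoint.infty = L e) ∧
      ∀ e i y, T e ((⟨i, y⟩ : Σ i, X i) : OnePoint (Σ i, X i)) = B i e y := by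
  have htendsto (e : E) :
      Tendsto (ContinuousMap.sigma fun i => B i e) (coclosedCompact _) (𝓝 (L e)) := by
    rw [Filter.coclosedCompact_sigma, Metric.tendsto_nhds]
    intro ε hε
    filter_upwards [(hlim e (ε / 2) (half_pos hε)).comap Sigma.fst] with z hz
    exact (hz z.2).trans_lt (half_lt_self hε)
  let T : E →ₗ[ℝ] C(OnePoint (Σ i, X i), ℝ) :=
    { toFun e := OnePoint.continuousMapMk _ _ (htendsto e)
      map_add' e e' := by
        ext z; induction z using OnePoint.rec <;> simp [OnePoint.continuousMapMk]
      map_smul' c e := by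
        ext z; induction z using OnePoint.rec <;> simp [OnePoint.continuousMapMk] }
  have hC : 0 ≤ C := (norm_nonneg L).trans hL
  have hT (e : E) : ‖T e‖ ≤ C * ‖e‖ := by
    refine (ContinuousMap.norm_le _ (mul_nonneg hC (norm_nonneg e))).2 fun z => ?_
    induction z using OnePoint.rec with
    | infty => exact L.le_of_opNorm_le hL e
    | coe z => exact ((B z.1 e).norm_coe_le_norm z.2).trans ((B z.1).le_of_opNorm_le (hB z.1) e)
  exact ⟨T.mkContinuous C hT, T.mkContinuous_norm_le hC hT, fun _ => rfl, fun _ _ _ => rfl⟩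

theorem stmt16_general {ι : Type*} (K : ι → Type*) [∀ i, TopologicalSpace (K i)]
    [∀ i, CompactSpace (K i)]
    (h : ∀ i, HasRegularExtensionProperty (K i)) :
    HasRegularExtensionProperty (OnePoint (Σ i, K i)) := by
  intro F hFne hF
  have : CompactSpace F := isCompact_iff_compactSpace.mp hF.isCompact
  obtain ⟨p, hp⟩ : ∃ p : F, ∀ h : OnePoint.infty ∈ F, p = ⟨OnePoint.infty, h⟩ := by
    by_cases hinf : OnePoint.infty ∈ F
    · exact ⟨⟨OnePoint.infty, hinf⟩, fun _ => rfl⟩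
    · exact ⟨⟨hFne.some, hFne.some_mem⟩, fun h => absurd h hinf⟩
  choose B hBnorm hB1 hBF hBtail using fun i => (h i).exists_extension_along hF p
    ⟨fun y => ((⟨i, y⟩ : Σ i, K i) : OnePoint (Σ i, K i)),
      OnePoint.continuous_coe.comp continuous_sigmaMk⟩
  obtain ⟨T, hTnorm, hTinf, hTcoe⟩ := OnePoint.exists_sigma_continuousLinearMap
    (ContinuousMap.evalCLM ℝ p) B (ContinuousMap.norm_evalCLM_le p) hBnorm fun f ε hε =>
      (OnePoint.eventually_cofinite_abs_sub_le hF p hp f hε).mono fun i hi =>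
        hBtail i f ε hε.le hi
  refine ⟨T, fun f => ?_, hTnorm, ?_⟩
  · ext ⟨z, hz⟩
    induction z using OnePoint.rec with
    | infty => exact (hTinf f).trans (congrArg f (hp hz))
    | coe z => exact (hTcoe f z.1 z.2).trans (hBF z.1 f z.2 hz)
  · ext z
    induction z using OnePoint.rec with
    | infty => simp [hTinf]
    | coe z => simp [hTcoe, hB1]

theorem stmt16 {ι : Type*} (K : ι → Type*) [∀ i, TopologicalSpace (K i)]
    [∀ i, CompactSpace (K i)] [∀ i, T2Space (K i)] [∀ i, Nonempty (K i)]
    (h : ∀ i, HasRegularExtensionProperty (K i)) :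
    HasRegularExtensionProperty (OnePoint (Σ i, K i)) :=
  stmt16_general K h
end
end

section
/- Every compact Hausdorff scattered space of height at most 2 has the regular extension property; that is, if K is a compact Hausdorff space whose second Cantor–Bendixson derivative K'' is empty, then K has the regular extension property. -/
open Filter Topology
open scoped ZeroAtInfty

noncomputable section

/-!
If `K''` is empty then, by compactness, `K'` is finite. Separate its points by pairwise disjoint
open sets `U p`. A nonempty closed `F` is then a retract of `K`: fix `F` pointwise, send the points
of `U p \ F` to `p` for `p ∈ K' ∩ F`, and every other point to a fixed point of `F`. This map is
continuous at isolated points trivially and at each `p ∈ K'` because it is locally constant off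
`F` near `p`. Precomposition with a retraction is a regular extension operator.
-/

open Set

section Collapse

variable {K : Type*} {F P : Set K} {U : K → Set K}

open Classical in
def collapseOnto (hP : P ⊆ F) (U : K → Set K) (q : F) (y : K) : F :=
  if hy : y ∈ F then ⟨y, hy⟩
  else if h : ∃ p ∈ P, y ∈ U p then ⟨h.choose, hP h.choose_spec.1⟩ else q

theorem collapseOnto_of_mem (hP : P ⊆ F) (q : F) {y : K} (hy : y ∈ F) :
    collapseOnto hP U q y = ⟨y, hy⟩ :=
  dif_pos hy

theorem collapseOnto_of_mem_nbhd (hP : P ⊆ F) (hU : P.PairwiseDisjoint U) (q : F) {p y : K}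
    (hp : p ∈ P) (hy : y ∉ F) (hyp : y ∈ U p) : collapseOnto hP U q y = ⟨p, hP hp⟩ := by
  have h : ∃ p ∈ P, y ∈ U p := ⟨p, hp, hyp⟩
  rw [collapseOnto, dif_neg hy, dif_pos h, Subtype.mk.injEq]
  by_contra hne
  exact (hU h.choose_spec.1 hp hne).le_bot ⟨h.choose_spec.2, hyp⟩

theorem collapseOnto_of_forall_notMem (hP : P ⊆ F) (q : F) {y : K} (hy : y ∉ F)
    (hyU : ∀ p ∈ P, y ∉ U p) : collapseOnto hP U q y = q := by
  rw [collapseOnto, dif_neg hy, dif_neg (by simpa using hyU)]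

theorem continuousOn_collapseOnto [TopologicalSpace K] (hP : P ⊆ F) (q : F) :
    ContinuousOn (collapseOnto hP U q) F := by
  rw [continuousOn_iff_continuous_domRestrict]
  convert continuous_id using 1
  funext y
  exact collapseOnto_of_mem hP q y.2

end Collapse

section Retraction

variable {K : Type*} [TopologicalSpace K]

theorem Set.finite_of_derivedSet_eq_empty [CompactSpace K] {s : Set K}
    (h : derivedSet s = ∅) : s.Finite := by
  by_contra hs
  obtain ⟨x, hx⟩ := Set.Infinite.exists_accPt_principal hs
  exact (h ▸ hx : x ∈ (∅ : Set K))

theorem continuousAt_of_notMem_derivedSet_univ {Y : Type*} [TopologicalSpace Y] {f : K → Y}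
    {x : K} (hx : x ∉ derivedSet (univ : Set K)) : ContinuousAt f x :=
  continuousAt_of_not_accPt fun h => hx (h.mono (principal_mono.2 (subset_univ _)))

theorem ContinuousWithinAt.continuousAt_of_eventually_eq_compl {Y : Type*} [TopologicalSpace Y]
    {f : K → Y} {s : Set K} {x : K} (hs : ContinuousWithinAt f s x)
    (hsc : ∀ᶠ y in 𝓝[sᶜ] x, f y = f x) : ContinuousAt f x := by
  rw [← continuousWithinAt_univ, ← union_compl_self s, continuousWithinAt_union]
  exact ⟨hs, tendsto_const_nhds.congr' (hsc.mono fun _ => Eq.symm)⟩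

theorem exists_retraction_of_finite_derivedSet [T2Space K]
    (hD : (derivedSet (univ : Set K)).Finite) {F : Set K} (hF : IsClosed F) (hne : F.Nonempty) :
    ∃ r : C(K, F), ∀ x : F, r x = x := by
  set D := derivedSet (univ : Set K)
  obtain ⟨U, hU, hUdisj⟩ := hD.t2_separation
  obtain ⟨q, hq⟩ := hne
  have hP : D ∩ F ⊆ F := inter_subset_right
  have hUP : (D ∩ F).PairwiseDisjoint U := hUdisj.subset inter_subset_left
  let r := collapseOnto hP U ⟨q, hq⟩
  refine ⟨⟨r, continuous_iff_continuousAt.2 fun x => ?_⟩, fun x => collapseOnto_of_mem hP _ x.2⟩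
  by_cases hxD : x ∉ D
  · exact continuousAt_of_notMem_derivedSet_univ hxD
  rw [not_not] at hxD
  have hwithin : ContinuousWithinAt r F x := by
    by_cases hxF : x ∈ F
    · exact (continuousOn_collapseOnto hP _).continuousWithinAt hxF
    · exact continuousWithinAt_of_notMem_closure (by rwa [hF.closure_eq])
  refine hwithin.continuousAt_of_eventually_eq_compl ?_
  filter_upwards [mem_nhdsWithin_of_mem_nhds ((hU x).2.mem_nhds (hU x).1),
    self_mem_nhdsWithin] with y hyU hyF
  show collapseOnto hP U _ y = collapseOnto hP U _ x
  by_cases hxF : x ∈ F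
  · rw [collapseOnto_of_mem_nbhd hP hUP _ ⟨hxD, hxF⟩ hyF hyU, collapseOnto_of_mem hP _ hxF]
  · have hoff : ∀ z ∈ U x, ∀ p ∈ D ∩ F, z ∉ U p := fun z hz p hp hzp =>
      (hUdisj hp.1 hxD (ne_of_mem_of_not_mem hp.2 hxF)).le_bot ⟨hzp, hz⟩
    rw [collapseOnto_of_forall_notMem hP _ hyF (hoff y hyU),
      collapseOnto_of_forall_notMem hP _ hxF (hoff x (hU x).1)]

end Retraction

theorem hasRegularExtensionOperator_of_retraction {K : Type*} [TopologicalSpace K]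
    [CompactSpace K] {F : Set K} (hF : IsClosed F) (r : C(K, F)) (hr : ∀ x : F, r x = x) :
    HasRegularExtensionOperator F hF := by
  have : CompactSpace F := isCompact_iff_compactSpace.mp hF.isCompact
  have hbound (f : C(F, ℝ)) : ‖f.comp r‖ ≤ 1 * ‖f‖ := by
    rw [one_mul]
    exact (ContinuousMap.norm_le _ (norm_nonneg f)).2 fun x => f.norm_coe_le_norm (r x)
  let E := (ContinuousMap.compRightAlgHom ℝ ℝ r).toLinearMap
  refine ⟨E.mkContinuous 1 hbound, fun f => ?_, E.mkContinuous_norm_le zero_le_one hbound, rfl⟩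
  ext x
  exact congrArg f (hr x)

theorem stmt17 {K : Type*} [TopologicalSpace K] [CompactSpace K] [T2Space K]
    (h : derivedSet (derivedSet (Set.univ : Set K)) = ∅) :
    HasRegularExtensionProperty K := by
  have hD : (derivedSet (univ : Set K)).Finite := finite_of_derivedSet_eq_empty h
  intro F hne hF
  obtain ⟨r, hr⟩ := exists_retraction_of_finite_derivedSet hD hF hne
  exact hasRegularExtensionOperator_of_retraction hF r hr
end
end

section
/- Let K be a compact Hausdorff space and F a closed subset of K. If K satisfies the countable chain condition and F admits an extension operator in K, then F satisfies the countable chain condition. -/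
open Filter Topology
open scoped ZeroAtInfty

noncomputable section

/-! Every nonempty open `U ⊆ F` carries an Urysohn function `f_U : F → [0, 1]` taking the value
`1` and supported in `U`. For a disjoint family `𝒰`, every finite sum of the `f_U` has norm at
most `1`, so at each point of `K` at most `2‖E‖` of the open sets `{E f_U > 1/2}` overlap.
In a ccc space such a family of nonempty open sets with bounded overlap is countable: induct on
the bound, noting that the nonempty intersections of a maximal number of the sets are pairwise
disjoint. -/

namespace CountableChainCondition

variable {X ι : Type*} [TopologicalSpace X]

theorem countable_of_pairwiseDisjoint (h : CountableChainCondition X) {V : ι → Set X}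
    {I : Set ι} (hVo : ∀ i ∈ I, IsOpen (V i)) (hVne : ∀ i ∈ I, (V i).Nonempty)
    (hV : I.PairwiseDisjoint V) : I.Countable := by
  have hinj : Set.InjOn V I := fun i hi j hj hij =>
    let ⟨x, hx⟩ := hVne i hi
    hV.elim_set hi hj x hx (hij ▸ hx)
  refine Set.countable_of_injective_of_countable_image hinj (h _ ?_ ?_)
  · rintro _ ⟨i, hi, rfl⟩
    exact ⟨hVo i hi, hVne i hi⟩
  · rintro _ ⟨i, hi, rfl⟩ _ ⟨j, hj, rfl⟩ hij
    exact hV hi hj fun h => hij (congrArg V h)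

theorem countable_of_forall_card_le (h : CountableChainCondition X) (V : ι → Set X)
    (n : ℕ) {I : Set ι} (hVo : ∀ i ∈ I, IsOpen (V i)) (hVne : ∀ i ∈ I, (V i).Nonempty)
    (hmult : ∀ x (s : Finset ι), ↑s ⊆ I → (∀ i ∈ s, x ∈ V i) → s.card ≤ n) :
    I.Countable := by
  induction n generalizing I with
  | zero =>
    convert Set.countable_empty
    refine Set.eq_empty_of_forall_notMem fun i hi => ?_
    obtain ⟨x, hx⟩ := hVne i hi
    simpa using hmult x {i} (by simpa using hi) (by simpa using hx)
  | succ n ih =>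
    classical
    set S : Set (Finset ι) := {s | ↑s ⊆ I ∧ s.card = n + 1 ∧ (⋂ i ∈ s, V i).Nonempty}
    -- a common point of two such intersections would lie in more than `n + 1` of the sets `V i`
    have hSdisj : S.PairwiseDisjoint fun s => ⋂ i ∈ s, V i := by
      intro s ⟨hsI, hs, _⟩ t ⟨htI, ht, _⟩ hst
      refine Set.disjoint_left.mpr fun x hxs hxt => hst ?_
      have hx : ∀ i ∈ s ∪ t, x ∈ V i := by
        simp only [Finset.mem_union]
        rintro i (hi | hi)
        exacts [Set.mem_iInter₂.mp hxs i hi, Set.mem_iInter₂.mp hxt i hi]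
      have hcard := hmult x (s ∪ t) (by simpa using ⟨hsI, htI⟩) hx
      have hunion : s ∪ t = s :=
        (Finset.eq_of_subset_of_card_le Finset.subset_union_left (hs ▸ hcard)).symm
      exact (Finset.eq_of_subset_of_card_le (Finset.union_eq_left.mp hunion) (by omega)).symm
    have hS : S.Countable := h.countable_of_pairwiseDisjoint
      (fun s hs => isOpen_biInter_finset fun i hi => hVo i (hs.1 hi)) (fun s hs => hs.2.2) hSdisj
    set I₀ : Set ι := ⋃ s ∈ S, ↑s
    have hI₀ : I₀.Countable := hS.biUnion fun s _ => s.countable_toSet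
    have hrest : (I \ I₀).Countable := by
      refine ih (fun i hi => hVo i hi.1) (fun i hi => hVne i hi.1) fun x s hsI hx => ?_
      by_contra! hlt
      obtain ⟨t, hts, ht⟩ := Finset.exists_subset_card_eq (Nat.succ_le_of_lt hlt)
      have htS : t ∈ S :=
        ⟨(Finset.coe_subset.mpr hts).trans (hsI.trans Set.sdiff_subset), ht,
          x, Set.mem_iInter₂.mpr fun i hi => hx i (hts hi)⟩
      obtain ⟨i, hi⟩ : t.Nonempty := Finset.card_pos.mp (by omega)
      exact (hsI (hts hi)).2 (Set.mem_biUnion htS hi)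
    exact (hI₀.union hrest).mono fun i hi => by by_cases h : i ∈ I₀ <;> simp [h, hi]

end CountableChainCondition

section

variable {Y Z ι : Type*} [TopologicalSpace Y] [CompactSpace Y] [TopologicalSpace Z]
  [CompactSpace Z]

theorem norm_sum_le_one_of_pairwiseDisjoint_support {f : ι → C(Y, ℝ)} {s : Finset ι}
    (hf : ∀ i ∈ s, ∀ y, f i y ∈ Set.Icc (0 : ℝ) 1)
    (hs : (s : Set ι).PairwiseDisjoint fun i => Function.support (f i)) :
    ‖∑ i ∈ s, f i‖ ≤ 1 := by
  refine (ContinuousMap.norm_le _ zero_le_one).mpr fun y => ?_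
  rw [ContinuousMap.sum_apply, Real.norm_of_nonneg (Finset.sum_nonneg fun i hi => (hf i hi y).1)]
  by_cases hzero : ∀ i ∈ s, f i y = 0
  · simp [Finset.sum_eq_zero hzero]
  push Not at hzero
  obtain ⟨i, hi, hiy⟩ := hzero
  have hsingle : ∑ j ∈ s, f j y = f i y := by
    refine Finset.sum_eq_single_of_mem i hi fun j hj hji => ?_
    by_contra hjy
    exact hji (hs.elim_set hj hi y hjy hiy)
  exact hsingle ▸ (hf i hi y).2

theorem card_mul_le_opNorm (T : C(Y, ℝ) →L[ℝ] C(Z, ℝ)) {f : ι → C(Y, ℝ)} {s : Finset ι}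
    (hf : ∀ i ∈ s, ∀ y, f i y ∈ Set.Icc (0 : ℝ) 1)
    (hs : (s : Set ι).PairwiseDisjoint fun i => Function.support (f i))
    {δ : ℝ} {z : Z} (hz : ∀ i ∈ s, δ ≤ T (f i) z) :
    s.card * δ ≤ ‖T‖ :=
  calc s.card * δ ≤ ∑ i ∈ s, T (f i) z := by simpa using Finset.card_nsmul_le_sum s _ δ hz
    _ = T (∑ i ∈ s, f i) z := by simp [map_sum]
    _ ≤ ‖T (∑ i ∈ s, f i)‖ := (le_abs_self _).trans ((T _).norm_coe_le_norm z)
    _ ≤ ‖T‖ * ‖∑ i ∈ s, f i‖ := T.le_opNorm _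
    _ ≤ ‖T‖ := mul_le_of_le_one_right (norm_nonneg T)
      (norm_sum_le_one_of_pairwiseDisjoint_support hf hs)

end

theorem IsExtensionOperator.apply_coe {K : Type*} [TopologicalSpace K] {F : Set K}
    {E : C(↥F, ℝ) →L[ℝ] C(K, ℝ)} (hE : IsExtensionOperator F E) (f : C(↥F, ℝ)) (y : ↥F) :
    E f y = f y :=
  DFunLike.congr_fun (hE f) y

theorem stmt18 {K : Type*} [TopologicalSpace K] [CompactSpace K] [T2Space K]
    (hccc : CountableChainCondition K)
    (F : Set K) (hF : IsClosed F) (hE : HasExtensionOperator F) :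
    CountableChainCondition ↥F := by
  intro 𝒰 h𝒰 hdisj
  obtain ⟨E, hE⟩ := hE
  have : CompactSpace ↥F := isCompact_iff_compactSpace.mp hF.isCompact
  have hbump : ∀ U ∈ 𝒰, ∃ f : C(↥F, ℝ), (∃ p, f p = 1) ∧
      (∀ y, f y ∈ Set.Icc (0 : ℝ) 1) ∧ Function.support f ⊆ U := by
    intro U hU
    obtain ⟨p, hp⟩ := (h𝒰 U hU).2
    obtain ⟨f, hfp, hfU, -, hf01⟩ := exists_continuous_one_zero_of_isCompact isCompact_singleton
      (h𝒰 U hU).1.isClosed_compl (Set.disjoint_singleton_left.mpr fun h => h hp)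
    exact ⟨f, ⟨p, hfp rfl⟩, hf01, Function.support_subset_iff'.mpr fun y hy => hfU hy⟩
  choose! f hf1 hf01 hfU using hbump
  have hne : ∀ U ∈ 𝒰, {x | 1 / 2 < E (f U) x}.Nonempty := fun U hU =>
    let ⟨p, hp⟩ := hf1 U hU
    ⟨p, by norm_num [hE.apply_coe, hp]⟩
  refine hccc.countable_of_forall_card_le (fun U => {x | 1 / 2 < E (f U) x}) ⌊2 * ‖E‖⌋₊
    (fun U _ => isOpen_lt continuous_const (E (f U)).continuous) hne fun x s hs hx => ?_
  have hsupp : (s : Set (Set ↥F)).PairwiseDisjoint fun U => Function.support (f U) :=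
    fun U hU V hV hUV => (hdisj (hs hU) (hs hV) hUV).mono (hfU U (hs hU)) (hfU V (hs hV))
  have hcard := card_mul_le_opNorm E (fun U hU => hf01 U (hs hU)) hsupp fun U hU => (hx U hU).le
  exact Nat.le_floor (by linarith)
end
end
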